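/- Let K ≥ T ≥ 1. For every initial (gold) sequence y : Fin T → α and every sequence z : Fin T → α, the probability of z under the Parallel Scheduled Sampling proposal distribution with mixing probability p = 1 after K passes equals the probability of z under the sample-decoding distribution: q^K_y(z) = P_T(z). -/

import Mathlib

open scoped ENNReal BigOperators

noncomputable section

variable {α : Type*}

/-- The list of tokens of `w` strictly before position `t` (0-indexed),
i.e. the prefix `(w_1, …, w_{t-1})` in 1-indexed notation. -/
def prefList {n : ℕ} (w : Fin n → α) (t : Fin n) : List α :=
  List.ofFn (fun s : Fin (t : ℕ) => w ⟨(s : ℕ), s.2.trans t.2⟩)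

/-- The sample-decoding probability of the sequence `z`:
`P_T(z) = ∏_{t=1}^T μ(z_1,…,z_{t-1})(z_t)`. -/
def sampleDecodeProb {T : ℕ} (μ : List α → PMF α) (z : Fin T → α) : ℝ≥0∞ :=
  ∏ t : Fin T, μ (prefList z t) (z t)

/-- The pass kernel `Q_k` (mixing probability `p = 1`): given input sequence `w`,
positions `t < k` (1-indexed) are copied from `w` deterministically, and each position
`t ≥ k` is drawn independently from `μ(w_1,…,w_{t-1})`. -/
def passKernel [Fintype α] [DecidableEq α] {T : ℕ}
    (μ : List α → PMF α) (k : ℕ) (w : Fin T → α) : PMF (Fin T → α) :=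
  PMF.ofFintype
    (fun z => ∏ t : Fin T,
      if (t : ℕ) + 1 < k then (if z t = w t then 1 else 0)
      else μ (prefList w t) (z t))
    (by
      classical
      have h : ∀ t : Fin T,
          (∑ a : α, if (t : ℕ) + 1 < k then (if a = w t then (1 : ℝ≥0∞) else 0)
            else μ (prefList w t) a) = 1 := by
        intro t
        split
        · simp
        · rw [← tsum_fintype (L := .unconditional _)]
          exact (μ (prefList w t)).tsum_coe
      calc
        (∑ z : Fin T → α, ∏ t : Fin T,
            if (t : ℕ) + 1 < k then (if z t = w t then (1 : ℝ≥0∞) else 0)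
            else μ (prefList w t) (z t))
            = ∏ t : Fin T, ∑ a : α,
                (if (t : ℕ) + 1 < k then (if a = w t then (1 : ℝ≥0∞) else 0)
                  else μ (prefList w t) a) := by
              rw [Finset.prod_univ_sum]
              rw [Fintype.piFinset_univ]
        _ = 1 := by
              rw [Finset.prod_congr rfl (fun t _ => h t)]
              simp)

/-- The Parallel Scheduled Sampling proposal distribution with mixing probability `p = 1`
after `K` passes, starting from the gold sequence `y`: the kernels `Q_1, …, Q_K` applied
in succession to the point mass at `y`. -/
def pssProposal [Fintype α] [DecidableEq α] {T : ℕ}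
    (μ : List α → PMF α) (y : Fin T → α) : ℕ → PMF (Fin T → α)
  | 0 => PMF.pure y
  | k + 1 => (pssProposal μ y k).bind (passKernel μ (k + 1))

/-- The probability, under the distribution `q` on sequences, of the event that the
first `t` output tokens equal the prefix `z : Fin t → α`. -/
def prefixProb {T t : ℕ} (q : PMF (Fin T → α)) (z : Fin t → α) : ℝ≥0∞ :=
  q.toOuterMeasure {w | ∀ s : Fin T, (h : (s : ℕ) < t) → w s = z ⟨(s : ℕ), h⟩}

/-!
Pass `k + 1` copies tokens `0, …, k - 1` of its input and resamples token `k` from `μ` given that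
prefix. Hence, if the first `k` tokens of the input are distributed as under sample decoding,
the first `k + 1` tokens of the output are too, and by induction the marginal of `q^k` on the
first `k` tokens is the sample-decoding distribution of length `k`. Every pass after the `T`-th
copies the whole sequence, so `q^K = q^T` for `K ≥ T`.
-/

theorem PMF.sum_coe [Fintype α] (p : PMF α) : ∑ a, p a = 1 := by
  simpa [tsum_fintype] using p.tsum_coe

theorem PMF.toOuterMeasure_univ_pi_of_apply_eq_prod {ι : Type*} [Fintype ι] [DecidableEq ι]
    {β : ι → Type*} [∀ i, Fintype (β i)] (p : PMF (∀ i, β i)) (f : ∀ i, β i → ℝ≥0∞)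
    (hp : ∀ x, p x = ∏ i, f i (x i)) (S : ∀ i, Set (β i)) :
    p.toOuterMeasure (Set.univ.pi S) = ∏ i, ∑ b, (S i).indicator (f i) b := by
  have hind : ∀ x, (Set.univ.pi S).indicator p x = ∏ i, (S i).indicator (f i) (x i) := by
    intro x
    by_cases hx : x ∈ Set.univ.pi S
    · rw [Set.indicator_of_mem hx, hp]
      exact Finset.prod_congr rfl fun i _ => (Set.indicator_of_mem (hx i trivial) _).symm
    · obtain ⟨i, -, hi⟩ := by simpa only [Set.mem_pi, not_forall] using hx
      rw [Set.indicator_of_notMem hx, Finset.prod_eq_zero (Finset.mem_univ i)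
        (Set.indicator_of_notMem hi _)]
  rw [PMF.toOuterMeasure_apply_fintype, Fintype.prod_sum]
  exact Fintype.sum_congr _ _ hind

theorem prefList_congr {T : ℕ} {w z : Fin T → α} {t : Fin T}
    (h : ∀ s : Fin T, s < t → w s = z s) : prefList w t = prefList z t :=
  congrArg List.ofFn <| funext fun s => h _ s.2

def prefixEvent {T : ℕ} (z : Fin T → α) (k : ℕ) : Set (Fin T → α) :=
  Set.univ.pi fun t => {a | (t : ℕ) < k → a = z t}

theorem mem_prefixEvent {T k : ℕ} {z w : Fin T → α} :
    w ∈ prefixEvent z k ↔ ∀ t : Fin T, (t : ℕ) < k → w t = z t := by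
  simp [prefixEvent]

theorem prefixProb_take {T k : ℕ} (q : PMF (Fin T → α)) (z : Fin T → α) (hk : k ≤ T) :
    prefixProb q (Fin.take k hk z) = q.toOuterMeasure (prefixEvent z k) := by
  unfold prefixProb prefixEvent
  congr 1
  ext w
  simp [Fin.take_apply]

theorem prefixProb_self {T : ℕ} (q : PMF (Fin T → α)) (z : Fin T → α) :
    prefixProb q z = q z := by
  unfold prefixProb
  convert q.toOuterMeasure_apply_singleton z
  ext w
  simp [funext_iff]

theorem sampleDecodeProb_take_succ {T k : ℕ} (μ : List α → PMF α) (z : Fin T → α) (hk : k < T) :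
    sampleDecodeProb μ (Fin.take (k + 1) hk z) =
      sampleDecodeProb μ (Fin.take k hk.le z) * μ (prefList z ⟨k, hk⟩) (z ⟨k, hk⟩) := by
  rw [sampleDecodeProb, Fin.prod_univ_castSucc]
  rfl

section Passes

variable [Fintype α] [DecidableEq α]

theorem passKernel_eq_pure {T k : ℕ} (μ : List α → PMF α) (hk : T < k) :
    passKernel (T := T) μ k = PMF.pure := by
  funext w
  ext z
  have hcopy : ∀ t : Fin T, (t : ℕ) + 1 < k := fun t => by omega
  simp [passKernel, hcopy, Finset.prod_boole, funext_iff]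

theorem pssProposal_eq_of_le {T K : ℕ} (μ : List α → PMF α) (y : Fin T → α) (hK : T ≤ K) :
    pssProposal μ y K = pssProposal μ y T := by
  induction K, hK using Nat.le_induction with
  | base => rfl
  | succ K hK ih =>
    rw [pssProposal, passKernel_eq_pure μ (Nat.lt_succ_of_le hK), PMF.bind_pure, ih]

theorem passKernel_toOuterMeasure_prefixEvent {T k : ℕ} (μ : List α → PMF α) (hk : k < T)
    (w z : Fin T → α) :
    (passKernel μ (k + 1) w).toOuterMeasure (prefixEvent z (k + 1)) =
      (prefixEvent z k).indicator (fun _ => μ (prefList z ⟨k, hk⟩) (z ⟨k, hk⟩)) w := by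
  rw [prefixEvent, PMF.toOuterMeasure_univ_pi_of_apply_eq_prod (passKernel μ (k + 1) w)
    (fun t a => if (t : ℕ) + 1 < k + 1 then (if a = w t then 1 else 0) else μ (prefList w t) a)
    fun _ => rfl]
  by_cases hw : w ∈ prefixEvent z k
  · rw [Set.indicator_of_mem hw, Finset.prod_eq_single ⟨k, hk⟩]
    all_goals rw [mem_prefixEvent] at hw
    · simpa [Set.indicator_apply] using
        congrArg (μ · (z ⟨k, hk⟩)) (prefList_congr hw)
    · intro t _ ht
      rcases lt_or_gt_of_ne (Fin.val_injective.ne ht) with h | h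
      · simp [Set.indicator_apply, h, Nat.lt_succ_of_lt h, hw t h]
      · have h1 : ¬ (t : ℕ) < k + 1 := by simp at h; omega
        simp [h1, PMF.sum_coe]
    · simp
  · obtain ⟨t, ht, hwt⟩ : ∃ t : Fin T, (t : ℕ) < k ∧ w t ≠ z t := by
      simpa [mem_prefixEvent] using hw
    rw [Set.indicator_of_notMem hw]
    refine Finset.prod_eq_zero (Finset.mem_univ t) ?_
    simp [Set.indicator_apply, ht, Nat.lt_succ_of_lt ht, Ne.symm hwt]

theorem prefixProb_pssProposal {T k : ℕ} (μ : List α → PMF α) (y z : Fin T → α) (hk : k ≤ T) :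
    prefixProb (pssProposal μ y k) (Fin.take k hk z) = sampleDecodeProb μ (Fin.take k hk z) := by
  induction k with
  | zero => simp [prefixProb, sampleDecodeProb, PMF.sum_coe]
  | succ k ih =>
    set q := pssProposal μ y k
    set c := μ (prefList z ⟨k, hk⟩) (z ⟨k, hk⟩)
    calc prefixProb (pssProposal μ y (k + 1)) (Fin.take (k + 1) hk z)
        = ∑' w, q w * (prefixEvent z k).indicator (fun _ => c) w := by
          rw [prefixProb_take, pssProposal, PMF.toOuterMeasure_bind_apply]
          simp_rw [passKernel_toOuterMeasure_prefixEvent μ hk]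
          rfl
      _ = q.toOuterMeasure (prefixEvent z k) * c := by
          rw [PMF.toOuterMeasure_apply, ← ENNReal.tsum_mul_right]
          refine tsum_congr fun w => ?_
          rw [← Set.indicator_mul_right, Set.indicator_mul_const]
      _ = sampleDecodeProb μ (Fin.take (k + 1) hk z) := by
          rw [← prefixProb_take, ih, sampleDecodeProb_take_succ]

end Passes

theorem pss_eq_sampleDecode_general [Fintype α] [DecidableEq α]
    {T K : ℕ} (hK : T ≤ K)
    (μ : List α → PMF α) (y z : Fin T → α) :
    pssProposal μ y K z = sampleDecodeProb μ z :=
  calc pssProposal μ y K z = prefixProb (pssProposal μ y T) z := by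
        rw [pssProposal_eq_of_le μ y hK, prefixProb_self]
    _ = sampleDecodeProb μ z := by
        simpa only [Fin.take_eq_self] using prefixProb_pssProposal μ y z le_rfl

/-- For `K ≥ T ≥ 1`, the probability of any sequence `z` under the
Parallel Scheduled Sampling proposal distribution with mixing probability `p = 1` after
`K` passes, started from any gold sequence `y`, equals its sample-decoding probability. -/
theorem pss_eq_sampleDecode [Fintype α] [DecidableEq α] [Nonempty α]
    {T K : ℕ} (hT : 1 ≤ T) (hK : T ≤ K)
    (μ : List α → PMF α) (y z : Fin T → α) :
    pssProposal μ y K z = sampleDecodeProb μ z :=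
  pss_eq_sampleDecode_general hK μ y z

end
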